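/- arXiv:1901.01879 — 3 statements merged into one kernel-verified Lean document; each statement's English description precedes it below -/
import Mathlib

section
/- Let g = m ⊕ h be a finite-dimensional real Hermitian symmetric Lie algebra with distinguished element A ∈ h. Then for every q ∈ m: (i) [A,[q,[q,[A,q]]]] = −[[A,q],[[A,q],q]], and (ii) [q,[A,[q,[q,[A,q]]]]] = 0. -/
/-
`D = ad A` is a derivation vanishing on `h`. Put `p = [A,q] ∈ m` and `s = [q,p] ∈ h`.
As `D s = 0`, `D [q,s] = [p,s]`, which is (i). As `[q,[q,s]] ∈ h` as well, applying `D` to it gives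
`[p,[q,s]] + [q,[p,s]] = 0`; by Jacobi and `[s,s] = 0` the two summands agree, so both vanish
(no 2-torsion), and (ii) reads `[q, D [q,s]] = [q,[p,s]] = 0`.
-/

section LieRing

variable {L : Type*} [LieRing L]

theorem lie_lie_of_lie_eq_zero {A y : L} (x : L) (hy : ⁅A, y⁆ = 0) :
    ⁅A, ⁅x, y⁆⁆ = ⁅⁅A, x⁆, y⁆ := by
  rw [leibniz_lie, hy, lie_zero, add_zero]

theorem lie_lie_lie_self_comm (q p : L) : ⁅q, ⁅p, ⁅q, p⁆⁆⁆ = ⁅p, ⁅q, ⁅q, p⁆⁆⁆ := by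
  rw [leibniz_lie, lie_self, zero_add]

theorem lie_lie_lie_lie_lie_eq_zero [IsAddTorsionFree L] {A q : L}
    (hs : ⁅A, ⁅q, ⁅A, q⁆⁆⁆ = 0) (ht : ⁅A, ⁅q, ⁅q, ⁅q, ⁅A, q⁆⁆⁆⁆⁆ = 0) :
    ⁅q, ⁅A, ⁅q, ⁅q, ⁅A, q⁆⁆⁆⁆⁆ = 0 := by
  rw [lie_lie_of_lie_eq_zero q hs]
  rw [leibniz_lie, lie_lie_of_lie_eq_zero q hs, ← lie_lie_lie_self_comm, ← two_nsmul] at ht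
  exact (smul_eq_zero.mp ht).resolve_left two_ne_zero

end LieRing

theorem hermitian_bracket_identities_general
    {L : Type*} [LieRing L] [LieAlgebra ℝ L]
    (m h : Submodule ℝ L)
    (hhm : ∀ X ∈ h, ∀ Y ∈ m, ⁅X, Y⁆ ∈ m)
    (hmm : ∀ X ∈ m, ∀ Y ∈ m, ⁅X, Y⁆ ∈ h)
    (A : L) (hA : A ∈ h)
    (hcent : ∀ Y ∈ h, ⁅A, Y⁆ = 0) :
    ∀ q ∈ m,
      (⁅A, ⁅q, ⁅q, ⁅A, q⁆⁆⁆⁆ = -⁅⁅A, q⁆, ⁅⁅A, q⁆, q⁆⁆) ∧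
      (⁅q, ⁅A, ⁅q, ⁅q, ⁅A, q⁆⁆⁆⁆⁆ = 0) := by
  intro q hq
  have hp : ⁅A, q⁆ ∈ m := hhm A hA q hq
  have hs : ⁅q, ⁅A, q⁆⁆ ∈ h := hmm q hq _ hp
  have hqs : ⁅q, ⁅q, ⁅A, q⁆⁆⁆ ∈ m := by
    rw [← lie_skew]
    exact m.neg_mem (hhm _ hs q hq)
  have : IsAddTorsionFree L := .of_isTorsionFree ℝ L
  have hAs : ⁅A, ⁅q, ⁅A, q⁆⁆⁆ = 0 := hcent _ hs
  refine ⟨?_, lie_lie_lie_lie_lie_eq_zero hAs (hcent _ (hmm q hq _ hqs))⟩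
  rw [lie_lie_of_lie_eq_zero q hAs, ← lie_skew q, lie_neg]

/-- In a finite-dimensional real Hermitian symmetric Lie algebra
`g = m ⊕ h` with distinguished element `A ∈ h`, for every `q ∈ m`:
(i) `[A,[q,[q,[A,q]]]] = -[[A,q],[[A,q],q]]`, and
(ii) `[q,[A,[q,[q,[A,q]]]]] = 0`. -/
theorem hermitian_bracket_identities
    {L : Type*} [LieRing L] [LieAlgebra ℝ L] [Module.Finite ℝ L]
    (m h : Submodule ℝ L) (hcompl : IsCompl m h)
    (hhh : ∀ X ∈ h, ∀ Y ∈ h, ⁅X, Y⁆ ∈ h)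
    (hhm : ∀ X ∈ h, ∀ Y ∈ m, ⁅X, Y⁆ ∈ m)
    (hmm : ∀ X ∈ m, ∀ Y ∈ m, ⁅X, Y⁆ ∈ h)
    (A : L) (hA : A ∈ h)
    (hcent : ∀ Y ∈ h, ⁅A, Y⁆ = 0)
    (hJ : ∀ X ∈ m, ⁅A, ⁅A, X⁆⁆ = -X) :
    ∀ q ∈ m,
      (⁅A, ⁅q, ⁅q, ⁅A, q⁆⁆⁆⁆ = -⁅⁅A, q⁆, ⁅⁅A, q⁆, q⁆⁆) ∧
      (⁅q, ⁅A, ⁅q, ⁅q, ⁅A, q⁆⁆⁆⁆⁆ = 0) :=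
  hermitian_bracket_identities_general m h hhm hmm A hA hcent
end

section
/- Let g ⊆ M_n(ℂ) be a Hermitian symmetric matrix Lie algebra g = m ⊕ h with distinguished element A ∈ h, let Q : ℝ² → m be smooth, and let φ : ℝ² × ℝ → GL(n,ℂ) be a smooth invertible-matrix-valued function of (s,t,λ) satisfying the linear isospectral system ∂_s φ = (λA + Q)φ and ∂_t φ = (−(1/2)[Q,[A,Q]] − [A,∂_s Q] + λQ + λ²A)φ. Define the Sym–Pohlmeyer curve γ(s,t) := (φ⁻¹ ∂_λ φ)(s,t,0). Then γ satisfies the Lie-algebra vortex filament (bi-normal) equation ∂_t γ = −[∂_s γ, ∂_s² γ]. -/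
attribute [local instance]
  Matrix.linftyOpNormedAddCommGroup Matrix.linftyOpNormedSpace
  Matrix.linftyOpNormedRing Matrix.linftyOpNormedAlgebra

open ContinuousLinearMap in
theorem SP.hd_snd {E : Type*} [NormedAddCommGroup E] [NormedSpace ℝ E] {f : ℝ → ℝ → E}
    (hf : ContDiff ℝ (⊤ : ℕ∞) (fun p : ℝ × ℝ => f p.1 p.2)) (x y : ℝ) :
    HasDerivAt (fun y' => f x y') (fderiv ℝ (fun p : ℝ × ℝ => f p.1 p.2) (x, y) (0, 1)) y := by
  have h := ((hf.differentiable (by simp) (x, y)).hasFDerivAt.comp_hasDerivAt y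
    (HasDerivAt.prodMk (hasDerivAt_const y x) (hasDerivAt_id y)))
  exact h

open ContinuousLinearMap in
theorem SP.hd_fst {E : Type*} [NormedAddCommGroup E] [NormedSpace ℝ E] {f : ℝ → ℝ → E}
    (hf : ContDiff ℝ (⊤ : ℕ∞) (fun p : ℝ × ℝ => f p.1 p.2)) (x y : ℝ) :
    HasDerivAt (fun x' => f x' y) (fderiv ℝ (fun p : ℝ × ℝ => f p.1 p.2) (x, y) (1, 0)) x := by
  have h := ((hf.differentiable (by simp) (x, y)).hasFDerivAt.comp_hasDerivAt x
    (HasDerivAt.prodMk (hasDerivAt_id x) (hasDerivAt_const x y)))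
  exact h

open ContinuousLinearMap in
/-- Clairaut's theorem for a smooth function of two real variables, packaged
with differentiability of the partial derivative. -/
theorem SP.deriv2_swap {E : Type*} [NormedAddCommGroup E] [NormedSpace ℝ E] {f : ℝ → ℝ → E}
    (hf : ContDiff ℝ (⊤ : ℕ∞) (fun p : ℝ × ℝ => f p.1 p.2)) (a b : ℝ) :
    HasDerivAt (fun x => deriv (fun y => f x y) b)
      (deriv (fun y => deriv (fun x => f x y) a) b) a := by
  set F : ℝ × ℝ → E := fun p => f p.1 p.2 with hF
  have hf' : ContDiff ℝ (⊤ : ℕ∞) (fderiv ℝ F) := hf.fderiv_right (by simp)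
  have hF'' : HasFDerivAt (fderiv ℝ F) (fderiv ℝ (fderiv ℝ F) (a, b)) (a, b) :=
    (hf'.differentiable (by simp) (a, b)).hasFDerivAt
  have hsymm : ∀ v w, fderiv ℝ (fderiv ℝ F) (a, b) v w = fderiv ℝ (fderiv ℝ F) (a, b) w v :=
    second_derivative_symmetric (fun y => (hf.differentiable (by simp) y).hasFDerivAt) hF''
  have h2 : HasDerivAt (fun x => fderiv ℝ F (x, b))
      (fderiv ℝ (fderiv ℝ F) (a, b) (1, 0)) a :=
    hF''.comp_hasDerivAt a (HasDerivAt.prodMk (hasDerivAt_id a) (hasDerivAt_const a b))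
  have h3 : HasDerivAt (fun x => fderiv ℝ F (x, b) (0, 1))
      (fderiv ℝ (fderiv ℝ F) (a, b) (1, 0) (0, 1)) a := by
    have := (ContinuousLinearMap.apply ℝ E ((0 : ℝ), (1 : ℝ))).hasFDerivAt.comp_hasDerivAt a h2
    exact this
  have h2' : HasDerivAt (fun y => fderiv ℝ F (a, y))
      (fderiv ℝ (fderiv ℝ F) (a, b) (0, 1)) b := by
    have := hF''.comp_hasDerivAt b (HasDerivAt.prodMk (hasDerivAt_const b a) (hasDerivAt_id b))
    exact this
  have h3' : HasDerivAt (fun y => fderiv ℝ F (a, y) (1, 0))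
      (fderiv ℝ (fderiv ℝ F) (a, b) (0, 1) (1, 0)) b := by
    have := (ContinuousLinearMap.apply ℝ E ((1 : ℝ), (0 : ℝ))).hasFDerivAt.comp_hasDerivAt b h2'
    exact this
  have e1 : (fun x => deriv (fun y => f x y) b) = fun x => fderiv ℝ F (x, b) (0, 1) := by
    funext x; exact (SP.hd_snd hf x b).deriv
  have e2 : deriv (fun y => deriv (fun x => f x y) a) b
      = fderiv ℝ (fderiv ℝ F) (a, b) (0, 1) (1, 0) := by
    have e3 : (fun y => deriv (fun x => f x y) a) = fun y => fderiv ℝ F (a, y) (1, 0) := by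
      funext y; exact (SP.hd_fst hf a y).deriv
    rw [e3]; exact h3'.deriv
  rw [e1, e2, ← hsymm]
  exact h3

/-- Derivative of the pointwise inverse of an invertible-matrix-valued function. -/
theorem SP.hasDerivAt_matinv {n : ℕ} {f : ℝ → Matrix (Fin n) (Fin n) ℂ}
    {f' : Matrix (Fin n) (Fin n) ℂ}
    {x : ℝ} (hf : HasDerivAt f f' x) (hu : IsUnit (f x)) :
    HasDerivAt (fun y => (f y)⁻¹) (-((f x)⁻¹ * f' * (f x)⁻¹)) x := by
  have h1 : HasFDerivAt Ring.inverse
      (-ContinuousLinearMap.mulLeftRight ℝ _ ↑hu.unit⁻¹ ↑hu.unit⁻¹) (f x) := by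
    simpa using hasFDerivAt_ringInverse (𝕜 := ℝ) hu.unit
  have h2 := h1.comp_hasDerivAt x hf
  have h4 : (↑hu.unit⁻¹ : Matrix (Fin n) (Fin n) ℂ) = (f x)⁻¹ := by
    rw [Matrix.nonsing_inv_eq_ringInverse, ← Ring.inverse_unit hu.unit]
    congr 1
  have h3 : (Ring.inverse ∘ f) = fun y => (f y)⁻¹ := by
    funext y; simp [Function.comp, Matrix.nonsing_inv_eq_ringInverse]
  rw [h3] at h2
  simp only [h4, mul_assoc] at h2
  exact h2

/-- The Sym–Pohlmeyer curve `γ = (φ⁻¹ ∂_λ φ)|_{λ=0}` constructed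
from a solution `φ` of the linear isospectral system of the Fordy–Kulish NLS
equation satisfies the Lie-algebra vortex filament (bi-normal) equation
`∂_t γ = −[∂_s γ, ∂_s² γ]`. -/
theorem symPohlmeyer_vortex_filament {n : ℕ}
    (m h : Submodule ℝ (Matrix (Fin n) (Fin n) ℂ)) (hcompl : IsCompl m h)
    (hhh : ∀ X ∈ h, ∀ Y ∈ h, ⁅X, Y⁆ ∈ h)
    (hhm : ∀ X ∈ h, ∀ Y ∈ m, ⁅X, Y⁆ ∈ m)
    (hmm : ∀ X ∈ m, ∀ Y ∈ m, ⁅X, Y⁆ ∈ h)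
    (A : Matrix (Fin n) (Fin n) ℂ) (hA : A ∈ h)
    (hcent : ∀ Y ∈ h, ⁅A, Y⁆ = 0)
    (hJ : ∀ X ∈ m, ⁅A, ⁅A, X⁆⁆ = -X)
    (Q : ℝ → ℝ → Matrix (Fin n) (Fin n) ℂ)
    (hQm : ∀ s t, Q s t ∈ m)
    (hQ : ContDiff ℝ (⊤ : ℕ∞) (fun p : ℝ × ℝ => Q p.1 p.2))
    (φ : ℝ → ℝ → ℝ → Matrix (Fin n) (Fin n) ℂ)
    (hφ : ContDiff ℝ (⊤ : ℕ∞) (fun p : ℝ × ℝ × ℝ => φ p.1 p.2.1 p.2.2))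
    (hinv : ∀ s t l, IsUnit (φ s t l))
    (hlin_s : ∀ s t l, deriv (fun s' => φ s' t l) s = (l • A + Q s t) * φ s t l)
    (hlin_t : ∀ s t l, deriv (fun t' => φ s t' l) t
      = (-((1/2 : ℝ) • ⁅Q s t, ⁅A, Q s t⁆⁆) - ⁅A, deriv (fun s' => Q s' t) s⁆
          + l • Q s t + (l^2) • A) * φ s t l)
    (γ : ℝ → ℝ → Matrix (Fin n) (Fin n) ℂ)
    (hγ : ∀ s t, γ s t = (φ s t 0)⁻¹ * deriv (fun l => φ s t l) 0) :
    ∀ s t, deriv (fun t' => γ s t') t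
      = -⁅deriv (fun s' => γ s' t) s,
           deriv (fun s' => deriv (fun s'' => γ s'' t) s') s⁆ := by
  -- abbreviation for the `t`-coefficient matrix
  set B : ℝ → ℝ → Matrix (Fin n) (Fin n) ℂ := fun s t =>
    -((1/2 : ℝ) • ⁅Q s t, ⁅A, Q s t⁆⁆) - ⁅A, deriv (fun s' => Q s' t) s⁆ with hB
  -- two-variable slices of φ are smooth
  have hφ12 : ∀ t, ContDiff ℝ (⊤ : ℕ∞) (fun p : ℝ × ℝ => φ p.1 t p.2) := fun t =>
    hφ.comp (ContDiff.prodMk (contDiff_fst) (ContDiff.prodMk (contDiff_const) contDiff_snd))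
  have hφ23 : ∀ s, ContDiff ℝ (⊤ : ℕ∞) (fun p : ℝ × ℝ => φ s p.1 p.2) := fun s =>
    hφ.comp (ContDiff.prodMk (contDiff_const) (ContDiff.prodMk (contDiff_fst) contDiff_snd))
  -- cancellation identities
  have hc1 : ∀ s t (X : Matrix (Fin n) (Fin n) ℂ), φ s t 0 * ((φ s t 0)⁻¹ * X) = X := by
    intro s t X
    rw [← mul_assoc, Matrix.mul_nonsing_inv _ ((Matrix.isUnit_iff_isUnit_det _).mp (hinv s t 0)),
      one_mul]
  have hc2 : ∀ s t (X : Matrix (Fin n) (Fin n) ℂ), (φ s t 0)⁻¹ * (φ s t 0 * X) = X := by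
    intro s t X
    rw [← mul_assoc, Matrix.nonsing_inv_mul _ ((Matrix.isUnit_iff_isUnit_det _).mp (hinv s t 0)),
      one_mul]
  -- s-derivative of φ
  have Hs : ∀ s t l, HasDerivAt (fun s' => φ s' t l) ((l • A + Q s t) * φ s t l) s := by
    intro s t l
    have h1 : HasDerivAt (fun s' => φ s' t l)
        (fderiv ℝ (fun p : ℝ × ℝ => φ p.1 t p.2) (s, l) (1, 0)) s := SP.hd_fst (hφ12 t) s l
    rw [← hlin_s s t l]
    exact h1.deriv ▸ h1
  have Hs0 : ∀ s t, HasDerivAt (fun s' => φ s' t 0) (Q s t * φ s t 0) s := by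
    intro s t
    have := Hs s t 0
    rwa [zero_smul, zero_add] at this
  -- t-derivative of φ
  have Ht : ∀ s t l, HasDerivAt (fun t' => φ s t' l)
      ((B s t + l • Q s t + (l^2) • A) * φ s t l) t := by
    intro s t l
    have h1 : HasDerivAt (fun t' => φ s t' l)
        (fderiv ℝ (fun p : ℝ × ℝ => φ s p.1 p.2) (t, l) (1, 0)) t := SP.hd_fst (hφ23 s) t l
    rw [hB, ← hlin_t s t l]
    exact h1.deriv ▸ h1
  have Ht0 : ∀ s t, HasDerivAt (fun t' => φ s t' 0) (B s t * φ s t 0) t := by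
    intro s t
    have := Ht s t 0
    simp only [zero_smul, add_zero, ne_eq, OfNat.ofNat_ne_zero, not_false_eq_true,
      zero_pow] at this
    simpa using this
  -- λ-derivative of φ at 0
  have Hl : ∀ s t, HasDerivAt (fun l => φ s t l) (deriv (fun l => φ s t l) 0) 0 := by
    intro s t
    have h1 : HasDerivAt (fun l => φ s t l)
        (fderiv ℝ (fun p : ℝ × ℝ => φ s p.1 p.2) (t, 0) (0, 1)) 0 := SP.hd_snd (hφ23 s) t 0
    exact h1.deriv ▸ h1
  -- mixed derivative: s-derivative of D := ∂_λ φ |₀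
  have HDs : ∀ s t, HasDerivAt (fun s' => deriv (fun l => φ s' t l) 0)
      (A * φ s t 0 + Q s t * deriv (fun l => φ s t l) 0) s := by
    intro s t
    have h3 : HasDerivAt (fun s' => deriv (fun l => φ s' t l) 0)
        (deriv (fun l => deriv (fun s' => φ s' t l) s) 0) s := SP.deriv2_swap (hφ12 t) s 0
    have e : (fun l => deriv (fun s' => φ s' t l) s)
        = fun l => (l • A + Q s t) * φ s t l := funext fun l => hlin_s s t l
    rw [e] at h3
    have ha : HasDerivAt (fun l : ℝ => l • A + Q s t) A 0 := by
      have h' := ((hasDerivAt_id (0:ℝ)).smul_const A).add_const (Q s t)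
      simp only [one_smul] at h'
      exact h'
    have h2 : HasDerivAt (fun l => (l • A + Q s t) * φ s t l)
        (A * φ s t 0 + Q s t * deriv (fun l => φ s t l) 0) 0 := by
      have := ha.mul (Hl s t)
      simp only [zero_smul, zero_add] at this
      exact this
    convert h3 using 1
    exact h2.deriv.symm
  -- mixed derivative: t-derivative of D
  have HDt : ∀ s t, HasDerivAt (fun t' => deriv (fun l => φ s t' l) 0)
      (Q s t * φ s t 0 + B s t * deriv (fun l => φ s t l) 0) t := by
    intro s t
    have h3 : HasDerivAt (fun t' => deriv (fun l => φ s t' l) 0)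
        (deriv (fun l => deriv (fun t' => φ s t' l) t) 0) t :=
      SP.deriv2_swap (hφ23 s) t 0
    have e : (fun l => deriv (fun t' => φ s t' l) t)
        = fun l => (B s t + l • Q s t + (l^2) • A) * φ s t l := by
      funext l; rw [hlin_t s t l, hB]
    rw [e] at h3
    have ha : HasDerivAt (fun l : ℝ => B s t + l • Q s t + (l^2) • A) (Q s t) 0 := by
      have h5 : HasDerivAt (fun l : ℝ => l • Q s t) (Q s t) 0 := by
        have h' := (hasDerivAt_id (0:ℝ)).smul_const (Q s t)
        simp only [one_smul] at h'
        exact h'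
      have h6 : HasDerivAt (fun l : ℝ => (l^2) • A) (0 : Matrix (Fin n) (Fin n) ℂ) 0 := by
        have h' := (hasDerivAt_pow 2 (0:ℝ)).smul_const A
        simp only [Nat.cast_ofNat, Nat.reduceSub, pow_one, mul_zero, zero_smul] at h'
        exact h'
      have h' := ((h5.const_add (B s t)).add h6)
      simp only [add_zero] at h'
      exact h'
    have h2 : HasDerivAt (fun l => (B s t + l • Q s t + (l^2) • A) * φ s t l)
        (Q s t * φ s t 0 + B s t * deriv (fun l => φ s t l) 0) 0 := by
      have := ha.mul (Hl s t)
      simp only [zero_smul, add_zero, ne_eq, OfNat.ofNat_ne_zero, not_false_eq_true,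
        zero_pow] at this
      exact this
    convert h3 using 1
    exact h2.deriv.symm
  -- derivatives of the inverse
  have HPs : ∀ s t, HasDerivAt (fun s' => (φ s' t 0)⁻¹)
      (-((φ s t 0)⁻¹ * (Q s t * φ s t 0) * (φ s t 0)⁻¹)) s := fun s t =>
    SP.hasDerivAt_matinv (Hs0 s t) (hinv s t 0)
  have HPt : ∀ s t, HasDerivAt (fun t' => (φ s t' 0)⁻¹)
      (-((φ s t 0)⁻¹ * (B s t * φ s t 0) * (φ s t 0)⁻¹)) t := fun s t =>
    SP.hasDerivAt_matinv (Ht0 s t) (hinv s t 0)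
  -- Claim 1 : ∂_s γ = φ⁻¹ A φ
  have C1 : ∀ s t, HasDerivAt (fun s' => γ s' t)
      ((φ s t 0)⁻¹ * (A * φ s t 0)) s := by
    intro s t
    have he : (fun s' => γ s' t) = fun s' => (φ s' t 0)⁻¹ * deriv (fun l => φ s' t l) 0 :=
      funext fun s' => hγ s' t
    rw [he]
    have hh := (HPs s t).mul (HDs s t)
    refine hh.congr_deriv ?_
    simp only [neg_mul, mul_add, mul_assoc, hc1 s t]
    abel
  -- Claim 2 : ∂_s² γ = φ⁻¹ [A,Q] φ
  have C2 : ∀ s t, HasDerivAt (fun s' => deriv (fun s'' => γ s'' t) s')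
      ((φ s t 0)⁻¹ * (⁅A, Q s t⁆ * φ s t 0)) s := by
    intro s t
    have he : (fun s' => deriv (fun s'' => γ s'' t) s')
        = fun s' => (φ s' t 0)⁻¹ * (A * φ s' t 0) := funext fun s' => (C1 s' t).deriv
    rw [he]
    have hh := (HPs s t).mul ((Hs0 s t).const_mul A)
    refine hh.congr_deriv ?_
    simp only [Ring.lie_def, neg_mul, mul_sub, sub_mul, mul_assoc, hc1 s t]
    abel
  -- Claim 3 : ∂_t γ = φ⁻¹ Q φ
  have C3 : ∀ s t, HasDerivAt (fun t' => γ s t')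
      ((φ s t 0)⁻¹ * (Q s t * φ s t 0)) t := by
    intro s t
    have he : (fun t' => γ s t') = fun t' => (φ s t' 0)⁻¹ * deriv (fun l => φ s t' l) 0 :=
      funext fun t' => hγ s t'
    rw [he]
    have hh := (HPt s t).mul (HDt s t)
    refine hh.congr_deriv ?_
    simp only [neg_mul, mul_add, mul_assoc, hc1 s t]
    abel
  -- conclusion
  intro s t
  rw [show deriv (fun t' => γ s t') t = _ from (C3 s t).deriv,
    show deriv (fun s' => γ s' t) s = _ from (C1 s t).deriv,
    show deriv (fun s' => deriv (fun s'' => γ s'' t) s') s = _ from (C2 s t).deriv]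
  have hca := hc1 s t
  have h0 := hJ (Q s t) (hQm s t)
  set C := ⁅A, Q s t⁆ with hCdef
  rw [Ring.lie_def (x := A) (y := C)] at h0
  have hq : Q s t = C * A - A * C := by
    rw [← neg_neg (Q s t), ← h0, neg_sub]
  rw [Ring.lie_def ((φ s t 0)⁻¹ * (A * φ s t 0)), hq]
  simp only [sub_mul, mul_sub, mul_assoc, hca]
  abel
end

section
/- Let θ ∈ ℝ and let Θ ∈ ℂ^N be a row vector with Θ̄·Θ = 1. Then the matrix exponential of ⟦θΘ⟧ ∈ su(N+1) is given in block form by exp(⟦θΘ⟧) = [[cos θ, (sin θ)Θ],[−(sin θ)Θ̄ᵀ, I_N + (cos θ − 1)Θ̄ᵀΘ]], an element of SU(N+1). -/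
open Matrix

/-- The embedding of a row vector `a ∈ ℂ^N` as the su(N+1) matrix
`⟦a⟧ = [[0, a],[−āᵀ, 0]]`. -/
noncomputable def mE {N : ℕ} (a : Fin N → ℂ) :
    Matrix (Fin 1 ⊕ Fin N) (Fin 1 ⊕ Fin N) ℂ :=
  Matrix.fromBlocks 0 (Matrix.of fun _ j => a j)
    (Matrix.of fun i _ => -(starRingEnd ℂ) (a i)) 0

/-- The Hermitian dot product `ā·b = Σ_k ā_k b_k` on `ℂ^N`. -/
noncomputable def dotc {N : ℕ} (a b : Fin N → ℂ) : ℂ :=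
  ∑ k, (starRingEnd ℂ) (a k) * b k

/-!
If `Θ̄·Θ = 1` then `X = ⟦Θ⟧` satisfies `X³ = -X`: writing `X = [[0, R], [-S, 0]]` with
`R S = 1`, one has `X² = [[-1, 0], [0, -S R]]`. Hence the powers of `θ X` alternate
between `±θ^(2n+1) X` and `±θ^(2n+2) X²`, and the exponential series splits into the sine
and cosine series: `exp (θ X) = 1 + sin θ • X + (1 - cos θ) • X²`. Reading off the blocks
of `X²` gives the formula.
-/

open NormedSpace Nat

section PowThreeEqNeg

variable {A : Type*} [Ring A] [Algebra ℝ A] {X : A}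

theorem pow_two_mul_add_one_of_pow_three_eq_neg (hX : X ^ 3 = -X) (n : ℕ) :
    X ^ (2 * n + 1) = ((-1 : ℝ) ^ n) • X := by
  induction n with
  | zero => simp
  | succ n ih =>
    calc X ^ (2 * (n + 1) + 1) = X ^ (2 * n + 1) * X ^ 2 := by rw [← pow_add]; ring_nf
      _ = ((-1 : ℝ) ^ (n + 1)) • X := by
        rw [ih, smul_mul_assoc, ← pow_succ' X 2, hX, pow_succ, mul_neg_one, neg_smul, smul_neg]

theorem pow_two_mul_add_two_of_pow_three_eq_neg (hX : X ^ 3 = -X) (n : ℕ) :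
    X ^ (2 * n + 2) = ((-1 : ℝ) ^ n) • X ^ 2 := by
  rw [pow_succ, pow_two_mul_add_one_of_pow_three_eq_neg hX, smul_mul_assoc, ← sq]

variable [TopologicalSpace A] [IsTopologicalRing A] [ContinuousSMul ℝ A] [T2Space A]

theorem exp_smul_of_pow_three_eq_neg (hX : X ^ 3 = -X) (θ : ℝ) :
    exp (θ • X) = 1 + Real.sin θ • X + (1 - Real.cos θ) • X ^ 2 := by
  have hodd : HasSum (fun n => ((2 * n + 1)! : ℝ)⁻¹ • (θ • X) ^ (2 * n + 1))
      (Real.sin θ • X) := by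
    have h := (Real.hasSum_sin θ).smul_const X
    refine h.congr_fun fun n => ?_
    rw [smul_pow, pow_two_mul_add_one_of_pow_three_eq_neg hX, smul_smul, smul_smul]
    congr 1
    ring
  have heven : HasSum (fun n => ((2 * n)! : ℝ)⁻¹ • (θ • X) ^ (2 * n))
      (1 + (1 - Real.cos θ) • X ^ 2) := by
    -- The `n = 0` term is `1`, not a multiple of `X²`, so both series are compared from `n = 1`.
    have h := ((hasSum_nat_add_iff' 1).mpr (Real.hasSum_cos θ)).smul_const (-X ^ 2)
    have hterm (n : ℕ) : ((2 * (n + 1))! : ℝ)⁻¹ • (θ • X) ^ (2 * (n + 1)) =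
        ((-1) ^ (n + 1) * θ ^ (2 * (n + 1)) / (2 * (n + 1))!) • -X ^ 2 := by
      rw [smul_pow, mul_add, mul_one, pow_two_mul_add_two_of_pow_three_eq_neg hX, smul_smul,
        smul_smul, smul_neg, ← neg_smul]
      congr 1
      ring
    have hval : 1 + (1 - Real.cos θ) • X ^ 2 - 1 = (Real.cos θ - 1) • -X ^ 2 := by module
    rw [← hasSum_nat_add_iff' 1]
    simp only [Finset.sum_range_one, mul_zero, pow_zero, factorial_zero, cast_one, inv_one,
      one_smul, div_one, one_mul, hterm, hval] at h ⊢
    exact h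
  rw [exp_eq_tsum ℝ, add_right_comm]
  exact (HasSum.even_add_odd (f := fun n => (n ! : ℝ)⁻¹ • (θ • X) ^ n) heven hodd).tsum_eq

end PowThreeEqNeg

section BlockAntidiagonal

variable {m n α : Type*} [Fintype m] [Fintype n] [DecidableEq m] [DecidableEq n] [Ring α]

theorem fromBlocks_zero_neg_zero_sq (R : Matrix m n α) (S : Matrix n m α) :
    fromBlocks 0 R (-S) 0 ^ 2 = fromBlocks (-(R * S)) 0 0 (-(S * R)) := by
  simp [sq, fromBlocks_multiply]

theorem fromBlocks_zero_neg_zero_pow_three {R : Matrix m n α} {S : Matrix n m α} (h : R * S = 1) :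
    fromBlocks 0 R (-S) 0 ^ 3 = -fromBlocks 0 R (-S) 0 := by
  simp [pow_succ, fromBlocks_multiply, fromBlocks_neg, h, Matrix.mul_assoc]

end BlockAntidiagonal

section mE

variable {N : ℕ}

theorem mE_eq_fromBlocks (a : Fin N → ℂ) :
    mE a = fromBlocks 0 (of fun _ j => a j) (-of fun i _ => starRingEnd ℂ (a i)) 0 :=
  rfl

theorem mE_real_smul (θ : ℝ) (a : Fin N → ℂ) : mE (θ • a) = θ • mE a := by
  ext (i | i) (j | j) <;> simp [mE, Complex.real_smul, mul_comm]

variable {Θ : Fin N → ℂ}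

theorem row_mul_conj_col_eq_one (hΘ : dotc Θ Θ = 1) :
    (of fun (_ : Fin 1) j => Θ j) * (of fun i (_ : Fin 1) => starRingEnd ℂ (Θ i)) = 1 := by
  ext i j
  rw [Subsingleton.elim i j, one_apply_eq]
  simpa [Matrix.mul_apply, dotc, mul_comm] using hΘ

theorem mE_sq (hΘ : dotc Θ Θ = 1) :
    mE Θ ^ 2 = fromBlocks (-1) 0 0 (-of fun j k => starRingEnd ℂ (Θ j) * Θ k) := by
  rw [mE_eq_fromBlocks, fromBlocks_zero_neg_zero_sq, row_mul_conj_col_eq_one hΘ]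
  congr
  ext j k
  simp [Matrix.mul_apply]

theorem mE_pow_three (hΘ : dotc Θ Θ = 1) : mE Θ ^ 3 = -mE Θ :=
  fromBlocks_zero_neg_zero_pow_three (row_mul_conj_col_eq_one hΘ)

end mE

/-- for a unit row vector `Θ ∈ ℂ^N` and `θ ∈ ℝ`, the matrix
exponential of `⟦θΘ⟧` is
`[[cos θ, (sin θ)Θ],[−(sin θ)Θ̄ᵀ, I_N + (cos θ − 1)Θ̄ᵀΘ]]`. -/
theorem su_exp_formula {N : ℕ} (θ : ℝ) (Θ : Fin N → ℂ) (hΘ : dotc Θ Θ = 1) :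
    NormedSpace.exp (mE (θ • Θ))
      = Matrix.fromBlocks
          (Matrix.of fun _ _ => (Real.cos θ : ℂ))
          (Matrix.of fun _ j => (Real.sin θ : ℂ) * Θ j)
          (Matrix.of fun i _ => -(Real.sin θ : ℂ) * (starRingEnd ℂ) (Θ i))
          ((1 : Matrix (Fin N) (Fin N) ℂ)
            + ((Real.cos θ : ℂ) - 1) •
                Matrix.of fun j k => (starRingEnd ℂ) (Θ j) * Θ k) := by
  rw [mE_real_smul, exp_smul_of_pow_three_eq_neg (mE_pow_three hΘ), mE_sq hΘ, mE_eq_fromBlocks,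
    ← fromBlocks_one, fromBlocks_smul, fromBlocks_smul, fromBlocks_add, fromBlocks_add]
  congr 1 <;> ext <;> simp [Complex.real_smul, Matrix.one_apply, Subsingleton.elim _ (0 : Fin 1)]
  ring
end
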